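/- Let Σ be a graded alphabet and let L_1 and L_2 be two finite tree languages over Σ. Let (Σ,Q,ν,δ) be the accessible part of the product RWTA A_{L_1} × A_{L_2}. Then the subtree series kernel satisfies KerSeries(L_1,L_2) = ν(Q) = Σ_{q∈Q} ν(q). -/

import Mathlib

/-- A tree over a graded alphabet `σ` with arity function `ar`. -/
inductive GTree (σ : Type) (ar : σ → ℕ) : Type
  | node (f : σ) (ts : Fin (ar f) → GTree σ ar) : GTree σ ar

/-- A root-weighted tree automaton (RWTA) over the graded alphabet `σ`
with weights in `M`. -/
structure RWTA (σ : Type) (ar : σ → ℕ) (M : Type) where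
  Q : Type
  fin : Finite Q := by infer_instance
  ν : Q → M
  δ : ∀ f : σ, (Fin (ar f) → Q) → Q → Prop

attribute [instance] RWTA.fin

variable {σ : Type} {ar : σ → ℕ} {M : Type}

/-- The reachability map `Δ_A`. -/
def RWTA.Delta (A : RWTA σ ar M) : GTree σ ar → Set A.Q
  | .node f ts => {q | ∃ qs : Fin (ar f) → A.Q,
      (∀ i, qs i ∈ A.Delta (ts i)) ∧ A.δ f qs q}

/-- The tree series realized by an RWTA: `P_A(t) = ν(Δ_A(t))`. -/
noncomputable def RWTA.P [AddCommMonoid M] (A : RWTA σ ar M) (t : GTree σ ar) : M :=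
  ∑ᶠ q ∈ A.Delta t, A.ν q

/-- An RWTA is sequential when `Card (Δ_A(t)) ≤ 1` for every tree. -/
def RWTA.Sequential (A : RWTA σ ar M) : Prop :=
  ∀ t : GTree σ ar, (A.Delta t).Subsingleton

/-- The down language of a state. -/
def RWTA.DownLang (A : RWTA σ ar M) (q : A.Q) : Set (GTree σ ar) :=
  {t | q ∈ A.Delta t}

/-- The sequential RWTA associated with `A` by the subset construction. -/
noncomputable def RWTA.subset [AddCommMonoid M] (A : RWTA σ ar M) : RWTA σ ar M where
  Q := Set A.Q
  ν := fun S => ∑ᶠ q ∈ S, A.ν q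
  δ := fun f Qs S =>
    S = {q | ∃ qs : Fin (ar f) → A.Q, (∀ i, qs i ∈ Qs i) ∧ A.δ f qs q}

/-- The accessible part of an RWTA. -/
def RWTA.acc (A : RWTA σ ar M) : RWTA σ ar M where
  Q := {q : A.Q // (A.DownLang q).Nonempty}
  ν := fun q => A.ν q.1
  δ := fun f qs q => A.δ f (fun i => (qs i).1) q.1

/-- The sum of two RWTAs (on the disjoint union of the state sets). -/
def RWTA.sum (A₁ A₂ : RWTA σ ar M) : RWTA σ ar M where
  Q := A₁.Q ⊕ A₂.Q
  ν := Sum.elim A₁.ν A₂.ν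
  δ := fun f qs q =>
    (∃ (qs' : Fin (ar f) → A₁.Q) (q' : A₁.Q),
        q = Sum.inl q' ∧ (∀ i, qs i = Sum.inl (qs' i)) ∧ A₁.δ f qs' q') ∨
    (∃ (qs' : Fin (ar f) → A₂.Q) (q' : A₂.Q),
        q = Sum.inr q' ∧ (∀ i, qs i = Sum.inr (qs' i)) ∧ A₂.δ f qs' q')

/-- The product of two RWTAs. -/
def RWTA.prod [Mul M] (A₁ A₂ : RWTA σ ar M) : RWTA σ ar M where
  Q := A₁.Q × A₂.Q
  ν := fun q => A₁.ν q.1 * A₂.ν q.2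
  δ := fun f qs q =>
    A₁.δ f (fun i => (qs i).1) q.1 ∧ A₂.δ f (fun i => (qs i).2) q.2

/-- The quotient of an RWTA by an equivalence relation on its states. -/
noncomputable def RWTA.quot [AddCommMonoid M] (A : RWTA σ ar M) (s : Setoid A.Q) :
    RWTA σ ar M where
  Q := Quotient s
  ν := fun C => ∑ᶠ q ∈ {q : A.Q | Quotient.mk s q = C}, A.ν q
  δ := fun f Cs C => ∃ (qs : Fin (ar f) → A.Q) (q : A.Q),
    (∀ i, Quotient.mk s (qs i) = Cs i) ∧ Quotient.mk s q = C ∧ A.δ f qs q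

/-- Relabelling of trees along a rank-preserving map of symbols. -/
def GTree.map {Γ : Type} {arΓ : Γ → ℕ} (g : σ → Γ) (hg : ∀ f, arΓ (g f) = ar f) :
    GTree σ ar → GTree Γ arΓ
  | .node f ts => .node (g f) (fun i => GTree.map g hg (ts (Fin.cast (hg f) i)))

/-- A morphism of RWTAs. -/
structure RWTA.Morphism {Γ : Type} {arΓ : Γ → ℕ}
    (A₁ : RWTA σ ar M) (A₂ : RWTA Γ arΓ M) where
  stateMap : A₁.Q → A₂.Q
  symMap : σ → Γ
  symRank : ∀ f, arΓ (symMap f) = ar f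
  transMap : ∀ (f : σ) (qs : Fin (ar f) → A₁.Q) (q : A₁.Q), A₁.δ f qs q →
    A₂.δ (symMap f) (fun i => stateMap (qs (Fin.cast (symRank f) i))) (stateMap q)
  weightMap : ∀ q, A₂.ν (stateMap q) = A₁.ν q

/-- Two RWTAs are isomorphic when there are mutually inverse morphisms between them. -/
def RWTA.Isomorphic {Γ : Type} {arΓ : Γ → ℕ}
    (A₁ : RWTA σ ar M) (A₂ : RWTA Γ arΓ M) : Prop :=
  ∃ (μ : A₁.Morphism A₂) (μ' : A₂.Morphism A₁),
    (∀ q, μ'.stateMap (μ.stateMap q) = q) ∧ (∀ q, μ.stateMap (μ'.stateMap q) = q) ∧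
    (∀ f, μ'.symMap (μ.symMap f) = f) ∧ (∀ f, μ.symMap (μ'.symMap f) = f)

/-- The size (number of nodes) of a tree. -/
def GTree.size : GTree σ ar → ℕ
  | .node _ ts => 1 + ∑ i, (ts i).size

/-- The set of subtrees of a tree. -/
def GTree.subTrees : GTree σ ar → Set (GTree σ ar)
  | .node f ts => insert (.node f ts) (⋃ i, (ts i).subTrees)

theorem GTree.subTrees_finite (t : GTree σ ar) : t.subTrees.Finite := by
  induction t with
  | node f ts ih => exact Set.Finite.insert _ (Set.finite_iUnion fun i => ih i)

-- `t.subCount s` is the number of occurrences of `s` as a subtree of `t`,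
-- i.e. `SubTreeSeries_t(s)`.
open Classical in
noncomputable def GTree.subCount : GTree σ ar → GTree σ ar → ℕ
  | .node f ts, s =>
      (if GTree.node f ts = s then 1 else 0) + ∑ i, (ts i).subCount s

/-- Indexing of the symbols of a tree by their position in a prefix traversal
(auxiliary function, threading the position of the root). -/
def GTree.sharpAux : GTree σ ar → ℕ → GTree (σ × ℕ) (fun p => ar p.1)
  | .node f ts, n => .node (f, n) (fun i =>
      (ts i).sharpAux (n + 1 + ∑ j : Fin (ar f), if j.1 < i.1 then (ts j).size else 0))

/-- `t^♯`: the tree `t` with each symbol indexed by its prefix-traversal position. -/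
def GTree.sharp (t : GTree σ ar) : GTree (σ × ℕ) (fun p => ar p.1) := t.sharpAux 0

/-- The map `h` dropping the indexes. -/
def GTree.unsharp : GTree (σ × ℕ) (fun p => ar p.1) → GTree σ ar :=
  GTree.map Prod.fst (fun _ => rfl)

/-- The subtree automaton `A_t` associated with a tree `t`. -/
def subtreeAut (t : GTree σ ar) : RWTA σ ar ℕ where
  Q := {r // r ∈ t.sharp.subTrees}
  fin := (t.sharp.subTrees_finite).to_subtype
  ν := fun _ => 1
  δ := fun f qs q => ∃ n : ℕ,
    (q : GTree (σ × ℕ) (fun p => ar p.1)) = .node (f, n) (fun i => (qs i : GTree (σ × ℕ) (fun p => ar p.1)))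

/-- The equivalence `∼_h` on the states of the subtree automaton. -/
def simH (t : GTree σ ar) : Setoid (subtreeAut t).Q :=
  Setoid.ker (fun r => GTree.unsharp r.1)

/-- The sequential subtree automaton `seq(A_t)` associated with a tree `t`. -/
noncomputable def seqSubtreeAut (t : GTree σ ar) : RWTA σ ar ℕ where
  Q := {r // r ∈ t.subTrees}
  fin := (t.subTrees_finite).to_subtype
  ν := fun r => t.subCount r.1
  δ := fun f qs q => (q : GTree σ ar) = .node f (fun i => (qs i : GTree σ ar))

/-- `SubTreeSet(L)`. -/
def subTreeSet (L : Set (GTree σ ar)) : Set (GTree σ ar) := ⋃ t ∈ L, t.subTrees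

/-- `SubTreeSeries_L`. -/
noncomputable def subSeriesL (L : Set (GTree σ ar)) (s : GTree σ ar) : ℕ :=
  ∑ᶠ t ∈ L, t.subCount s

/-- The sequential subtree automaton `A_L` associated with a finite tree language. -/
noncomputable def langSubtreeAut (L : Set (GTree σ ar)) (hL : L.Finite) : RWTA σ ar ℕ where
  Q := {r // r ∈ subTreeSet L}
  fin := (hL.biUnion fun t _ => t.subTrees_finite).to_subtype
  ν := fun r => subSeriesL L r.1
  δ := fun f qs q => (q : GTree σ ar) = .node f (fun i => (qs i : GTree σ ar))

/-!
The product `A_{L₁} × A_{L₂}` reaches the state `(t₁, t₂)` on a tree `t` exactly when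
`t₁ = t = t₂`, since each `A_L` recognises every subtree by itself. Hence its accessible states
are the diagonal pairs `(t, t)` with `t` a common subtree of `L₁` and `L₂`, of weight
`SubTreeSeries_{L₁}(t) · SubTreeSeries_{L₂}(t)`; every other term of the kernel vanishes.
-/

namespace GTree

lemma mem_subTrees_self (t : GTree σ ar) : t ∈ t.subTrees := by
  cases t with
  | node f ts => exact Set.mem_insert _ _

lemma mem_subTrees_of_node_mem {u : GTree σ ar} {f : σ} {ts : Fin (ar f) → GTree σ ar}
    (h : node f ts ∈ u.subTrees) (i : Fin (ar f)) : ts i ∈ u.subTrees := by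
  induction u with
  | node g us ih =>
    rcases h with h | h
    · cases h
      exact Set.mem_insert_of_mem _ (Set.mem_iUnion.2 ⟨i, mem_subTrees_self _⟩)
    · obtain ⟨j, hj⟩ := Set.mem_iUnion.1 h
      exact Set.mem_insert_of_mem _ (Set.mem_iUnion.2 ⟨j, ih j hj⟩)

lemma subCount_eq_zero_of_notMem : ∀ {t s : GTree σ ar}, s ∉ t.subTrees → t.subCount s = 0
  | .node f ts, s, h => by
    simp only [subTrees, Set.mem_insert_iff, Set.mem_iUnion, not_or, not_exists] at h
    rw [subCount, if_neg fun e => h.1 e.symm,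
      Finset.sum_eq_zero fun i _ => subCount_eq_zero_of_notMem (h.2 i), add_zero]

end GTree

section SubtreeAutomaton

lemma mem_subTreeSet_of_node_mem {L : Set (GTree σ ar)} {f : σ} {ts : Fin (ar f) → GTree σ ar}
    (h : GTree.node f ts ∈ subTreeSet L) (i : Fin (ar f)) : ts i ∈ subTreeSet L := by
  obtain ⟨u, hu, hmem⟩ := Set.mem_iUnion₂.1 h
  exact Set.mem_iUnion₂.2 ⟨u, hu, GTree.mem_subTrees_of_node_mem hmem i⟩

lemma support_subSeriesL_subset (L : Set (GTree σ ar)) :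
    Function.support (subSeriesL L) ⊆ subTreeSet L := by
  intro s hs
  by_contra hL
  exact hs <| finsum_mem_of_eqOn_zero fun t ht =>
    GTree.subCount_eq_zero_of_notMem fun hst => hL (Set.mem_iUnion₂.2 ⟨t, ht, hst⟩)

lemma RWTA.mem_Delta_prod_iff [Mul M] {A₁ A₂ : RWTA σ ar M} :
    ∀ (t : GTree σ ar) (q : (A₁.prod A₂).Q),
      q ∈ (A₁.prod A₂).Delta t ↔ q.1 ∈ A₁.Delta t ∧ q.2 ∈ A₂.Delta t
  | .node f ts, q => by
    constructor
    · rintro ⟨qs, hqs, h₁, h₂⟩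
      have hqs' i := (mem_Delta_prod_iff (ts i) (qs i)).1 (hqs i)
      exact ⟨⟨fun i => (qs i).1, fun i => (hqs' i).1, h₁⟩,
        ⟨fun i => (qs i).2, fun i => (hqs' i).2, h₂⟩⟩
    · rintro ⟨⟨qs₁, hqs₁, h₁⟩, ⟨qs₂, hqs₂, h₂⟩⟩
      exact ⟨fun i => (qs₁ i, qs₂ i),
        fun i => (mem_Delta_prod_iff (ts i) _).2 ⟨hqs₁ i, hqs₂ i⟩, h₁, h₂⟩

lemma RWTA.downLang_prod [Mul M] (A₁ A₂ : RWTA σ ar M) (q : (A₁.prod A₂).Q) :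
    (A₁.prod A₂).DownLang q = A₁.DownLang q.1 ∩ A₂.DownLang q.2 :=
  Set.ext fun t => mem_Delta_prod_iff t q

lemma langSubtreeAut_mem_Delta_iff {L : Set (GTree σ ar)} {hL : L.Finite} :
    ∀ (t : GTree σ ar) (q : (langSubtreeAut L hL).Q),
      q ∈ (langSubtreeAut L hL).Delta t ↔ q.1 = t
  | .node f ts, q => by
    constructor
    · rintro ⟨qs, hqs, hδ⟩
      have hts : (fun i => (qs i).1) = ts :=
        funext fun i => (langSubtreeAut_mem_Delta_iff (ts i) (qs i)).1 (hqs i)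
      exact hδ.trans (congrArg _ hts)
    · intro hq
      exact ⟨fun i => ⟨ts i, mem_subTreeSet_of_node_mem (hq ▸ q.2) i⟩,
        fun i => (langSubtreeAut_mem_Delta_iff (ts i) _).2 rfl, hq⟩

lemma langSubtreeAut_downLang {L : Set (GTree σ ar)} {hL : L.Finite}
    (q : (langSubtreeAut L hL).Q) : (langSubtreeAut L hL).DownLang q = {q.1} :=
  Set.ext fun t => (langSubtreeAut_mem_Delta_iff t q).trans eq_comm

variable {L₁ L₂ : Set (GTree σ ar)} {h₁ : L₁.Finite} {h₂ : L₂.Finite}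

lemma langSubtreeAut_prod_downLang_nonempty_iff
    (q : ((langSubtreeAut L₁ h₁).prod (langSubtreeAut L₂ h₂)).Q) :
    (((langSubtreeAut L₁ h₁).prod (langSubtreeAut L₂ h₂)).DownLang q).Nonempty ↔
      q.1.1 = q.2.1 := by
  rw [RWTA.downLang_prod, langSubtreeAut_downLang, langSubtreeAut_downLang,
    Set.singleton_inter_nonempty, Set.mem_singleton_iff]

def langSubtreeAutProdAccEquiv :
    ((langSubtreeAut L₁ h₁).prod (langSubtreeAut L₂ h₂)).acc.Q ≃
      ↥(subTreeSet L₁ ∩ subTreeSet L₂) where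
  toFun q :=
    ⟨q.1.1.1, q.1.1.2, (langSubtreeAut_prod_downLang_nonempty_iff q.1).1 q.2 ▸ q.1.2.2⟩
  invFun t :=
    ⟨(⟨t, t.2.1⟩, ⟨t, t.2.2⟩), (langSubtreeAut_prod_downLang_nonempty_iff _).2 rfl⟩
  left_inv q := Subtype.ext <| Prod.ext rfl <|
    Subtype.ext ((langSubtreeAut_prod_downLang_nonempty_iff q.1).1 q.2)
  right_inv _ := rfl

lemma langSubtreeAut_prod_acc_ν_eq
    (q : ((langSubtreeAut L₁ h₁).prod (langSubtreeAut L₂ h₂)).acc.Q) :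
    ((langSubtreeAut L₁ h₁).prod (langSubtreeAut L₂ h₂)).acc.ν q =
      subSeriesL L₁ (langSubtreeAutProdAccEquiv q).1 *
        subSeriesL L₂ (langSubtreeAutProdAccEquiv q).1 := by
  change subSeriesL L₁ q.1.1.1 * subSeriesL L₂ q.1.2.1 = _
  rw [← (langSubtreeAut_prod_downLang_nonempty_iff q.1).1 q.2]
  rfl

end SubtreeAutomaton

theorem kernel_computation {σ : Type} {ar : σ → ℕ}
    (L₁ L₂ : Set (GTree σ ar)) (h₁ : L₁.Finite) (h₂ : L₂.Finite) :
    (∑ᶠ t : GTree σ ar, subSeriesL L₁ t * subSeriesL L₂ t) =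
      ∑ᶠ q : (((langSubtreeAut L₁ h₁).prod (langSubtreeAut L₂ h₂)).acc).Q,
        (((langSubtreeAut L₁ h₁).prod (langSubtreeAut L₂ h₂)).acc).ν q := by
  have hsupport : Function.support (fun t => subSeriesL L₁ t * subSeriesL L₂ t) ⊆
      subTreeSet L₁ ∩ subTreeSet L₂ := by
    rw [Function.support_mul]
    exact Set.inter_subset_inter (support_subSeriesL_subset L₁) (support_subSeriesL_subset L₂)
  calc (∑ᶠ t : GTree σ ar, subSeriesL L₁ t * subSeriesL L₂ t)
      = ∑ᶠ t ∈ subTreeSet L₁ ∩ subTreeSet L₂, subSeriesL L₁ t * subSeriesL L₂ t :=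
        (finsum_mem_univ _).symm.trans <|
          finsum_mem_inter_support_eq' _ _ _ fun t ht => iff_of_true trivial (hsupport ht)
    _ = ∑ᶠ t : ↥(subTreeSet L₁ ∩ subTreeSet L₂), subSeriesL L₁ t * subSeriesL L₂ t :=
        (finsum_set_coe_eq_finsum_mem _).symm
    _ = _ := (finsum_eq_of_bijective _ langSubtreeAutProdAccEquiv.bijective
        langSubtreeAut_prod_acc_ν_eq).symm
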